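/- arXiv:2501.18374 — 4 statements merged into one kernel-verified Lean document; each statement's English description precedes it below -/
import Mathlib

section
/- Let X and Y be measurable spaces, let P_X be a probability measure on X, and let P_{Y|X} = (P_{Y|X=x})_{x∈X} be a conditional probability measure (Markov kernel) from X to Y. Let P_Y be the marginal probability measure on Y defined by P_Y(B) = ∫ P_{Y|X=x}(B) dP_X(x), let P_{XY} be the joint probability measure on X×Y defined by P_{XY}(A) = ∫ P_{Y|X=x}(A_x) dP_X(x) where A_x = {y : (x,y) ∈ A}, and let P_X P_Y be the product measure of the marginals. Assume that for every x ∈ X, P_{Y|X=x} is absolutely continuous with respect to P_Y. Then P_{XY} is absolutely continuous with respect to P_X P_Y and, for P_X P_Y-almost every (x, y), (dP_{XY}/d(P_X P_Y))(x, y) = (dP_{Y|X=x}/dP_Y)(y). -/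
open MeasureTheory ProbabilityTheory
open scoped ENNReal

/-- Bayes-like rule (joint vs product of marginals): let `PX` be a probability
measure on `X`, `κ` a Markov kernel from `X` to `Y`, `PY` the marginal on `Y`
(`PY(B) = ∫ κ x (B) dPX(x)`), and `PXY` the joint probability measure on
`X × Y` (`PXY(A) = ∫ κ x (A_x) dPX(x)`). Assume `κ x ≪ PY` for every `x`, and
let `f` be a jointly measurable choice of the Radon–Nikodym derivatives
`(x, y) ↦ (d(κ x)/dPY)(y)`. Then `PXY ≪ PX × PY` and, for `PX × PY`-almost
every `(x, y)`, `(dPXY/d(PX × PY))(x, y) = (d(κ x)/dPY)(y)`. -/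
theorem bayes_like_rule {X Y : Type*} [MeasurableSpace X] [MeasurableSpace Y]
    (PX : Measure X) [IsProbabilityMeasure PX]
    (κ : Kernel X Y) [IsMarkovKernel κ]
    (PY : Measure Y) (hPY : ∀ B : Set Y, MeasurableSet B → PY B = ∫⁻ x, κ x B ∂PX)
    (PXY : Measure (X × Y))
    (hPXY : ∀ A : Set (X × Y), MeasurableSet A →
      PXY A = ∫⁻ x, κ x {y | (x, y) ∈ A} ∂PX)
    (hac : ∀ x, κ x ≪ PY)
    (f : X × Y → ℝ≥0∞) (hf : Measurable f)
    (hfd : ∀ x, ∀ B : Set Y, MeasurableSet B → κ x B = ∫⁻ y in B, f (x, y) ∂PY) :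
    PXY ≪ PX.prod PY ∧ PXY.rnDeriv (PX.prod PY) =ᵐ[PX.prod PY] f := by
  have hPYprob : IsProbabilityMeasure PY := by
    constructor
    rw [hPY _ MeasurableSet.univ]
    simp
  have heq : PXY = (PX.prod PY).withDensity f := by
    ext A hA
    rw [withDensity_apply _ hA, ← lintegral_indicator hA, lintegral_prod _ (hf.indicator hA).aemeasurable,
      hPXY A hA]
    refine lintegral_congr fun x => ?_
    have hsec : MeasurableSet {y | (x, y) ∈ A} := measurable_prodMk_left hA
    rw [hfd x _ hsec, ← lintegral_indicator hsec]
    refine lintegral_congr fun y => ?_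
    simp only [Set.indicator]
    rfl
  constructor
  · rw [heq]; exact withDensity_absolutelyContinuous _ _
  · rw [heq]; exact Measure.rnDeriv_withDensity (PX.prod PY) hf
end

section
/- Let X and Y be measurable spaces, let P_X be a probability measure on X, and let P_{Y|X} = (P_{Y|X=x})_{x∈X} and P_{X|Y} = (P_{X|Y=y})_{y∈Y} be conditional probability measures (Markov kernels) from X to Y and from Y to X, respectively. Let P_Y(B) = ∫ P_{Y|X=x}(B) dP_X(x) be the marginal on Y, and assume the two disintegrations determine the same joint law: for every measurable A ⊆ X×Y, ∫ P_{Y|X=x}(A_x) dP_X(x) = ∫ P_{X|Y=y}(A^y) dP_Y(y), where A_x = {y : (x,y) ∈ A} and A^y = {x : (x,y) ∈ A}. Assume that for every x ∈ X, P_{Y|X=x} ≪ P_Y, and for every y ∈ Y, P_{X|Y=y} ≪ P_X. Then, for P_X P_Y-almost every (x, y), (dP_{X|Y=y}/dP_X)(x) = (dP_{Y|X=x}/dP_Y)(y), where P_X P_Y is the product of the marginals. -/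
open MeasureTheory ProbabilityTheory Set
open scoped ENNReal

/-!
The measures with densities `f` and `g` against `PX × PY` both give a rectangle `s × t` its mass
under the joint law, computed by Tonelli through `κ` and through `η` respectively. Being finite
and equal on rectangles, they are equal, and densities of one measure against the σ-finite
`PX × PY` agree almost everywhere.
-/

section Rectangles

variable {X Y : Type*} [MeasurableSpace X] [MeasurableSpace Y] {μ : Measure X} {ν : Measure Y}

lemma lintegral_apply_setOf_mem_prod_right (m : X → Measure Y) {s : Set X} (hs : MeasurableSet s)
    (t : Set Y) : ∫⁻ x, m x {y | (x, y) ∈ s ×ˢ t} ∂μ = ∫⁻ x in s, m x t ∂μ := by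
  rw [← lintegral_indicator hs]
  congr with x
  by_cases hx : x ∈ s <;> simp [hx]

lemma lintegral_apply_setOf_mem_prod_left (m : Y → Measure X) (s : Set X) {t : Set Y}
    (ht : MeasurableSet t) : ∫⁻ y, m y {x | (x, y) ∈ s ×ˢ t} ∂ν = ∫⁻ y in t, m y s ∂ν := by
  rw [← lintegral_indicator ht]
  congr with y
  by_cases hy : y ∈ t <;> simp [hy]

variable [SFinite μ] [SFinite ν]

lemma withDensity_prod_apply_prod_of_density_right {κ : X → Measure Y} {f : X × Y → ℝ≥0∞}
    (hf : Measurable f) (hfd : ∀ x, ∀ B : Set Y, MeasurableSet B → κ x B = ∫⁻ y in B, f (x, y) ∂ν)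
    {s : Set X} {t : Set Y} (hs : MeasurableSet s) (ht : MeasurableSet t) :
    (μ.prod ν).withDensity f (s ×ˢ t) = ∫⁻ x in s, κ x t ∂μ := by
  rw [withDensity_apply _ (hs.prod ht), setLIntegral_prod _ hf.aemeasurable]
  exact setLIntegral_congr_fun hs fun x _ ↦ (hfd x t ht).symm

lemma withDensity_prod_apply_prod_of_density_left {η : Y → Measure X} {g : X × Y → ℝ≥0∞}
    (hg : Measurable g) (hgd : ∀ y, ∀ A : Set X, MeasurableSet A → η y A = ∫⁻ x in A, g (x, y) ∂μ)
    {s : Set X} {t : Set Y} (hs : MeasurableSet s) (ht : MeasurableSet t) :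
    (μ.prod ν).withDensity g (s ×ˢ t) = ∫⁻ y in t, η y s ∂ν := by
  rw [withDensity_apply _ (hs.prod ht), setLIntegral_prod_symm _ hg.aemeasurable]
  exact setLIntegral_congr_fun ht fun y _ ↦ (hgd y s hs).symm

end Rectangles

theorem bayes_like_rule_kernels_general {X Y : Type*} [MeasurableSpace X] [MeasurableSpace Y]
    (PX : Measure X) [IsProbabilityMeasure PX]
    (κ : Kernel X Y) [IsMarkovKernel κ]
    (η : Kernel Y X)
    (PY : Measure Y) (hPY : ∀ B : Set Y, MeasurableSet B → PY B = ∫⁻ x, κ x B ∂PX)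
    (hjoint : ∀ A : Set (X × Y), MeasurableSet A →
      ∫⁻ x, κ x {y | (x, y) ∈ A} ∂PX = ∫⁻ y, η y {x | (x, y) ∈ A} ∂PY)
    (f : X × Y → ℝ≥0∞) (hf : Measurable f)
    (hfd : ∀ x, ∀ B : Set Y, MeasurableSet B → κ x B = ∫⁻ y in B, f (x, y) ∂PY)
    (g : X × Y → ℝ≥0∞) (hg : Measurable g)
    (hgd : ∀ y, ∀ A : Set X, MeasurableSet A → η y A = ∫⁻ x in A, g (x, y) ∂PX) :
    g =ᵐ[PX.prod PY] f := by
  have : IsProbabilityMeasure PY := ⟨by simp [hPY univ .univ]⟩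
  have hjoint_rect {s : Set X} {t : Set Y} (hs : MeasurableSet s) (ht : MeasurableSet t) :
      ∫⁻ x in s, κ x t ∂PX = ∫⁻ y in t, η y s ∂PY := by
    simpa only [lintegral_apply_setOf_mem_prod_right _ hs,
      lintegral_apply_setOf_mem_prod_left _ _ ht] using hjoint _ (hs.prod ht)
  have : IsFiniteMeasure ((PX.prod PY).withDensity f) := ⟨by
    rw [← univ_prod_univ, withDensity_prod_apply_prod_of_density_right hf hfd .univ .univ]
    simp⟩
  refine ((withDensity_eq_iff_of_sigmaFinite hf.aemeasurable hg.aemeasurable).mp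
    (Measure.ext_prod fun hs ht ↦ ?_)).symm
  rw [withDensity_prod_apply_prod_of_density_right hf hfd hs ht,
    withDensity_prod_apply_prod_of_density_left hg hgd hs ht, hjoint_rect hs ht]

/-- Bayes-like rule (equality of conditional densities): let `PX` be a
probability measure on `X`, `κ` a Markov kernel from `X` to `Y` and `η` a
Markov kernel from `Y` to `X`, and `PY` the marginal on `Y`
(`PY(B) = ∫ κ x (B) dPX(x)`). Assume the two disintegrations determine the same
joint law: for every measurable `A ⊆ X × Y`,
`∫ κ x (A_x) dPX(x) = ∫ η y (A^y) dPY(y)`. Assume `κ x ≪ PY` for every `x` and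
`η y ≪ PX` for every `y`, and let `f` and `g` be jointly measurable choices of
the Radon–Nikodym derivatives `(x, y) ↦ (d(κ x)/dPY)(y)` and
`(x, y) ↦ (d(η y)/dPX)(x)`, respectively. Then, for `PX × PY`-almost every
`(x, y)`, `(d(η y)/dPX)(x) = (d(κ x)/dPY)(y)`. -/
theorem bayes_like_rule_kernels {X Y : Type*} [MeasurableSpace X] [MeasurableSpace Y]
    (PX : Measure X) [IsProbabilityMeasure PX]
    (κ : Kernel X Y) [IsMarkovKernel κ]
    (η : Kernel Y X) [IsMarkovKernel η]
    (PY : Measure Y) (hPY : ∀ B : Set Y, MeasurableSet B → PY B = ∫⁻ x, κ x B ∂PX)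
    (hjoint : ∀ A : Set (X × Y), MeasurableSet A →
      ∫⁻ x, κ x {y | (x, y) ∈ A} ∂PX = ∫⁻ y, η y {x | (x, y) ∈ A} ∂PY)
    (hacκ : ∀ x, κ x ≪ PY) (hacη : ∀ y, η y ≪ PX)
    (f : X × Y → ℝ≥0∞) (hf : Measurable f)
    (hfd : ∀ x, ∀ B : Set Y, MeasurableSet B → κ x B = ∫⁻ y in B, f (x, y) ∂PY)
    (g : X × Y → ℝ≥0∞) (hg : Measurable g)
    (hgd : ∀ y, ∀ A : Set X, MeasurableSet A → η y A = ∫⁻ x in A, g (x, y) ∂PX) :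
    g =ᵐ[PX.prod PY] f :=
  bayes_like_rule_kernels_general PX κ η PY hPY hjoint f hf hfd g hg hgd
end

section
/- Let X and Y be measurable spaces, let P_X be a probability measure on X, and let P_{Y|X} = (P_{Y|X=x})_{x∈X} be a conditional probability measure (Markov kernel) from X to Y. Let P_Y be the marginal probability measure on Y defined by P_Y(B) = ∫ P_{Y|X=x}(B) dP_X(x), let P_{XY} be the joint probability measure on X×Y defined by P_{XY}(A) = ∫ P_{Y|X=x}(A_x) dP_X(x) where A_x = {y : (x,y) ∈ A}, and let P_X P_Y be the product measure of the marginals. Assume that for every x ∈ X, P_Y is absolutely continuous with respect to P_{Y|X=x}. Then P_X P_Y is absolutely continuous with respect to P_{XY} and, for P_{XY}-almost every (x, y), (d(P_X P_Y)/dP_{XY})(x, y) = (dP_Y/dP_{Y|X=x})(y). -/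
open MeasureTheory ProbabilityTheory
open scoped ENNReal

/-! The joint law is `PX ⊗ₘ κ` and the marginal is `κ ∘ₘ PX`. Since `PY` has density `g (x, ·)`
with respect to every `κ x`, the measure with density `g` with respect to the joint law gives a
rectangle `s ×ˢ t` the mass `∫⁻ x in s, PY t ∂PX = PX s * PY t`; hence it is the product of the
marginals, and both claims follow for a measure given by a density. -/

namespace MeasureTheory.Measure

variable {α β : Type*} [MeasurableSpace α] [MeasurableSpace β]

theorem prod_eq_withDensity_compProd {μ : Measure α} [SigmaFinite μ] {κ : Kernel α β}
    [IsSFiniteKernel κ] {ν : Measure β} [SigmaFinite ν] {g : α × β → ℝ≥0∞} (hg : Measurable g)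
    (hν : ∀ a, (κ a).withDensity (fun b => g (a, b)) = ν) :
    μ.prod ν = (μ ⊗ₘ κ).withDensity g := by
  refine prod_eq fun s t hs ht => ?_
  rw [withDensity_apply _ (hs.prod ht), setLIntegral_compProd hg hs ht]
  calc ∫⁻ a in s, ∫⁻ b in t, g (a, b) ∂κ a ∂μ = ∫⁻ _ in s, ν t ∂μ := by
        simp_rw [← withDensity_apply _ ht, hν]
    _ = μ s * ν t := by rw [setLIntegral_const, mul_comm]

end MeasureTheory.Measure

theorem inverse_bayes_like_rule_general {X Y : Type*} [MeasurableSpace X] [MeasurableSpace Y]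
    (PX : Measure X) [IsProbabilityMeasure PX]
    (κ : Kernel X Y) [IsMarkovKernel κ]
    (PY : Measure Y) (hPY : ∀ B : Set Y, MeasurableSet B → PY B = ∫⁻ x, κ x B ∂PX)
    (PXY : Measure (X × Y))
    (hPXY : ∀ A : Set (X × Y), MeasurableSet A →
      PXY A = ∫⁻ x, κ x {y | (x, y) ∈ A} ∂PX)
    (g : X × Y → ℝ≥0∞) (hg : Measurable g)
    (hgd : ∀ x, ∀ B : Set Y, MeasurableSet B → PY B = ∫⁻ y in B, g (x, y) ∂(κ x)) :
    PX.prod PY ≪ PXY ∧ (PX.prod PY).rnDeriv PXY =ᵐ[PXY] g := by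
  have hPY_comp : PY = κ ∘ₘ PX :=
    Measure.ext fun B hB => (hPY B hB).trans (Measure.bind_apply hB κ.aemeasurable).symm
  have hPXY_compProd : PXY = PX ⊗ₘ κ :=
    Measure.ext fun A hA => (hPXY A hA).trans (Measure.compProd_apply hA).symm
  have hdensity (x : X) : (κ x).withDensity (fun y => g (x, y)) = PY :=
    Measure.ext fun B hB => (withDensity_apply _ hB).trans (hgd x B hB).symm
  subst hPY_comp hPXY_compProd
  rw [Measure.prod_eq_withDensity_compProd hg hdensity]
  exact ⟨withDensity_absolutelyContinuous _ _, Measure.rnDeriv_withDensity _ hg⟩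

/-- Inverse Bayes-like rule (product of marginals vs joint): let `PX` be a
probability measure on `X`, `κ` a Markov kernel from `X` to `Y`, `PY` the
marginal on `Y` (`PY(B) = ∫ κ x (B) dPX(x)`), and `PXY` the joint probability
measure on `X × Y` (`PXY(A) = ∫ κ x (A_x) dPX(x)`). Assume `PY ≪ κ x` for
every `x`, and let `g` be a jointly measurable choice of the Radon–Nikodym
derivatives `(x, y) ↦ (dPY/d(κ x))(y)`, i.e. for every `x` and every measurable
`B`, `PY(B) = ∫ y in B, g (x, y) d(κ x)(y)`. Then `PX × PY ≪ PXY` and, for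
`PXY`-almost every `(x, y)`, `(d(PX × PY)/dPXY)(x, y) = (dPY/d(κ x))(y)`. -/
theorem inverse_bayes_like_rule {X Y : Type*} [MeasurableSpace X] [MeasurableSpace Y]
    (PX : Measure X) [IsProbabilityMeasure PX]
    (κ : Kernel X Y) [IsMarkovKernel κ]
    (PY : Measure Y) (hPY : ∀ B : Set Y, MeasurableSet B → PY B = ∫⁻ x, κ x B ∂PX)
    (PXY : Measure (X × Y))
    (hPXY : ∀ A : Set (X × Y), MeasurableSet A →
      PXY A = ∫⁻ x, κ x {y | (x, y) ∈ A} ∂PX)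
    (hac : ∀ x, PY ≪ κ x)
    (g : X × Y → ℝ≥0∞) (hg : Measurable g)
    (hgd : ∀ x, ∀ B : Set Y, MeasurableSet B → PY B = ∫⁻ y in B, g (x, y) ∂(κ x)) :
    PX.prod PY ≪ PXY ∧ (PX.prod PY).rnDeriv PXY =ᵐ[PXY] g :=
  inverse_bayes_like_rule_general PX κ PY hPY PXY hPXY g hg hgd
end

section
/- Let X and Y be measurable spaces, let P_X be a probability measure on X, and let P_{Y|X} = (P_{Y|X=x})_{x∈X} and P_{X|Y} = (P_{X|Y=y})_{y∈Y} be conditional probability measures (Markov kernels) from X to Y and from Y to X, respectively. Let P_Y(B) = ∫ P_{Y|X=x}(B) dP_X(x) be the marginal on Y, let P_{XY}(A) = ∫ P_{Y|X=x}(A_x) dP_X(x) be the joint probability measure on X×Y, and assume the two disintegrations determine the same joint law: for every measurable A ⊆ X×Y, P_{XY}(A) = ∫ P_{X|Y=y}(A^y) dP_Y(y), where A_x = {y : (x,y) ∈ A} and A^y = {x : (x,y) ∈ A}. Assume that for every x ∈ X, P_Y ≪ P_{Y|X=x}, and for every y ∈ Y, P_X ≪ P_{X|Y=y}. Then, for P_{XY}-almost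 every (x, y), (dP_X/dP_{X|Y=y})(x) = (dP_Y/dP_{Y|X=x})(y). -/
open MeasureTheory ProbabilityTheory
open scoped ENNReal

/-- Inverse Bayes-like rule (equality of inverse conditional densities): let
`PX` be a probability measure on `X`, `κ` a Markov kernel from `X` to `Y` and
`η` a Markov kernel from `Y` to `X`, `PY` the marginal on `Y`
(`PY(B) = ∫ κ x (B) dPX(x)`), and `PXY` the joint probability measure on
`X × Y` (`PXY(A) = ∫ κ x (A_x) dPX(x)`). Assume the two disintegrations
determine the same joint law: `PXY(A) = ∫ η y (A^y) dPY(y)` for every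
measurable `A`. Assume `PY ≪ κ x` for every `x` and `PX ≪ η y` for every `y`,
and let `g` and `h` be jointly measurable choices of the Radon–Nikodym
derivatives `(x, y) ↦ (dPY/d(κ x))(y)` and `(x, y) ↦ (dPX/d(η y))(x)`,
respectively. Then, for `PXY`-almost every `(x, y)`,
`(dPX/d(η y))(x) = (dPY/d(κ x))(y)`. -/
theorem inverse_bayes_like_rule_kernels {X Y : Type*} [MeasurableSpace X] [MeasurableSpace Y]
    (PX : Measure X) [IsProbabilityMeasure PX]
    (κ : Kernel X Y) [IsMarkovKernel κ]
    (η : Kernel Y X) [IsMarkovKernel η]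
    (PY : Measure Y) (hPY : ∀ B : Set Y, MeasurableSet B → PY B = ∫⁻ x, κ x B ∂PX)
    (PXY : Measure (X × Y))
    (hPXY : ∀ A : Set (X × Y), MeasurableSet A →
      PXY A = ∫⁻ x, κ x {y | (x, y) ∈ A} ∂PX)
    (hjoint : ∀ A : Set (X × Y), MeasurableSet A →
      PXY A = ∫⁻ y, η y {x | (x, y) ∈ A} ∂PY)
    (hacκ : ∀ x, PY ≪ κ x) (hacη : ∀ y, PX ≪ η y)
    (g : X × Y → ℝ≥0∞) (hg : Measurable g)
    (hgd : ∀ x, ∀ B : Set Y, MeasurableSet B → PY B = ∫⁻ y in B, g (x, y) ∂(κ x))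
    (h : X × Y → ℝ≥0∞) (hh : Measurable h)
    (hhd : ∀ y, ∀ A : Set X, MeasurableSet A → PX A = ∫⁻ x in A, h (x, y) ∂(η y)) :
    h =ᵐ[PXY] g := by
  haveI : IsProbabilityMeasure PY := by
    constructor
    rw [hPY Set.univ MeasurableSet.univ]
    simp
  have hPXY_eq : PXY = PX ⊗ₘ κ := by
    ext A hA
    rw [hPXY A hA, Measure.compProd_apply hA]
    rfl
  have hswap : PXY = (PY ⊗ₘ η).map Prod.swap := by
    ext A hA
    rw [Measure.map_apply measurable_swap hA,
      Measure.compProd_apply (measurable_swap hA), hjoint A hA]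
    rfl
  haveI : IsProbabilityMeasure PXY := by rw [hPXY_eq]; infer_instance
  refine ae_eq_of_forall_setLIntegral_eq_of_sigmaFinite hh hg fun A hA _ => ?_
  -- compute the integral of `g` over `A`
  have hgint : ∫⁻ p in A, g p ∂PXY = (PX.prod PY) A := by
    rw [hPXY_eq, ← lintegral_indicator hA, Measure.lintegral_compProd (hg.indicator hA)]
    rw [Measure.prod_apply hA]
    refine lintegral_congr fun x => ?_
    have : ∀ y, A.indicator g (x, y)
        = (Prod.mk x ⁻¹' A).indicator (fun y => g (x, y)) y := by
      intro y
      by_cases hy : (x, y) ∈ A <;> simp [Set.indicator, hy]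
    simp_rw [this]
    rw [lintegral_indicator (measurable_prodMk_left hA)]
    exact (hgd x _ (measurable_prodMk_left hA)).symm
  -- compute the integral of `h` over `A`
  have hhint : ∫⁻ p in A, h p ∂PXY = (PX.prod PY) A := by
    have hm : Measurable ((Prod.swap ⁻¹' A).indicator fun q : Y × X => h q.swap) := by
      exact (hh.comp measurable_swap).indicator (measurable_swap hA)
    rw [hswap, setLIntegral_map hA hh measurable_swap,
      ← lintegral_indicator (measurable_swap hA),
      Measure.lintegral_compProd hm]
    rw [Measure.prod_apply_symm hA]
    refine lintegral_congr fun y => ?_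
    have : ∀ x, (Prod.swap ⁻¹' A).indicator (fun q => h (Prod.swap q)) (y, x)
        = ((fun x => (x, y)) ⁻¹' A).indicator (fun x => h (x, y)) x := by
      intro x
      by_cases hx : (x, y) ∈ A <;> simp [Set.indicator, hx, Prod.swap]
    simp_rw [this]
    rw [lintegral_indicator (measurable_prodMk_right hA)]
    exact (hhd y _ (measurable_prodMk_right hA)).symm
  rw [hgint, hhint]
end
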